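/- arXiv:1812.07600 — 6 statements merged into one kernel-verified Lean document; each statement's English description precedes it below -/
import Mathlib

section
/- In a cubical set with connections, for any singular n-cube τ and β ∈ {+,−}: ∂_{n+1} Γ_1^β(τ) = − Γ_1^β ∘ Σ_{i=2}^n (-1)^i (f_i^- − f_i^+)(τ), where ∂ is the cubical boundary operator. -/
structure PrecubicalConn where
  K : ℕ → Type*
  face : Bool → ∀ n : ℕ, ℕ → K (n + 1) → K n
  degen : ∀ n : ℕ, ℕ → K n → K (n + 1)
  conn : Bool → ∀ n : ℕ, ℕ → K n → K (n + 1)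

/-- The axioms of a cubical set with connections (`true` stands for `+`, `false` for `-`;
indices are 1-based with explicit range guards). -/
structure CubicalConnAxioms (P : PrecubicalConn) : Prop where
  face_face : ∀ (α β : Bool) (n i j : ℕ) (σ : P.K (n + 2)), 1 ≤ i → i < j → j ≤ n + 2 →
    P.face α n i (P.face β (n + 1) j σ) = P.face β n (j - 1) (P.face α (n + 1) i σ)
  degen_degen : ∀ (n i j : ℕ) (σ : P.K n), 1 ≤ i → i ≤ j → j ≤ n + 1 →
    P.degen (n + 1) i (P.degen n j σ) = P.degen (n + 1) (j + 1) (P.degen n i σ)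
  face_degen_lt : ∀ (α : Bool) (n i j : ℕ) (σ : P.K (n + 1)), 1 ≤ i → i < j → j ≤ n + 2 →
    P.face α (n + 1) i (P.degen (n + 1) j σ) = P.degen n (j - 1) (P.face α n i σ)
  face_degen_gt : ∀ (α : Bool) (n i j : ℕ) (σ : P.K (n + 1)), 1 ≤ j → j < i → i ≤ n + 2 →
    P.face α (n + 1) i (P.degen (n + 1) j σ) = P.degen n j (P.face α n (i - 1) σ)
  face_degen_eq : ∀ (α : Bool) (n i : ℕ) (σ : P.K n), 1 ≤ i → i ≤ n + 1 →
    P.face α n i (P.degen n i σ) = σ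
  conn_conn : ∀ (α β : Bool) (n i j : ℕ) (σ : P.K n), 1 ≤ i → i ≤ j → j ≤ n →
    P.conn α (n + 1) i (P.conn β n j σ) = P.conn β (n + 1) (j + 1) (P.conn α n i σ)
  conn_degen_lt : ∀ (α : Bool) (n i j : ℕ) (σ : P.K n), 1 ≤ i → i < j → j ≤ n + 1 →
    P.conn α (n + 1) i (P.degen n j σ) = P.degen (n + 1) (j + 1) (P.conn α n i σ)
  conn_degen_gt : ∀ (α : Bool) (n i j : ℕ) (σ : P.K n), 1 ≤ j → j < i → i ≤ n + 1 →
    P.conn α (n + 1) i (P.degen n j σ) = P.degen (n + 1) j (P.conn α n (i - 1) σ)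
  conn_degen_eq : ∀ (α : Bool) (n i : ℕ) (σ : P.K n), 1 ≤ i → i ≤ n + 1 →
    P.conn α (n + 1) i (P.degen n i σ) = P.degen (n + 1) (i + 1) (P.degen n i σ)
  face_conn_lt : ∀ (α β : Bool) (n i j : ℕ) (σ : P.K (n + 1)), 1 ≤ i → i < j → j ≤ n + 1 →
    P.face α (n + 1) i (P.conn β (n + 1) j σ) = P.conn β n (j - 1) (P.face α n i σ)
  face_conn_gt : ∀ (α β : Bool) (n i j : ℕ) (σ : P.K (n + 1)), 1 ≤ j → j + 1 < i → i ≤ n + 2 →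
    P.face α (n + 1) i (P.conn β (n + 1) j σ) = P.conn β n j (P.face α n (i - 1) σ)
  face_conn_self : ∀ (β : Bool) (n i j : ℕ) (σ : P.K n), 1 ≤ j → j ≤ n → (i = j ∨ i = j + 1) →
    P.face β n i (P.conn β n j σ) = σ
  face_conn_opp : ∀ (α β : Bool) (n i j : ℕ) (σ : P.K (n + 1)), 1 ≤ j → j ≤ n + 1 →
    (i = j ∨ i = j + 1) → α ≠ β →
    P.face α (n + 1) i (P.conn β (n + 1) j σ) = P.degen n j (P.face α n j σ)

/-- A cube is degenerate if it is of the form `ε_i f_i^+ σ`. -/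
def PrecubicalConn.Degenerate (P : PrecubicalConn) : ∀ {n : ℕ}, P.K n → Prop :=
  fun {n} σ =>
    match n, σ with
    | 0, _ => False
    | m + 1, σ => ∃ i : ℕ, 1 ≤ i ∧ i ≤ m + 1 ∧ σ = P.degen m i (P.face true m i σ)

/-- A cube is a connection if it lies in the image of some `Γ_i^β`. -/
def PrecubicalConn.IsConn (P : PrecubicalConn) : ∀ {n : ℕ}, P.K n → Prop :=
  fun {n} σ =>
    match n, σ with
    | 0, _ => False
    | m + 1, σ => ∃ (β : Bool) (i : ℕ) (τ : P.K m), 1 ≤ i ∧ i ≤ m ∧ σ = P.conn β m i τ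

/-- The linear extension of the face map `f_i^α` to the free `R`-module on the cubes. -/
noncomputable def Fmap (P : PrecubicalConn) (R : Type*) [CommRing R] (α : Bool) (n i : ℕ) :
    (P.K (n + 1) →₀ R) →ₗ[R] (P.K n →₀ R) :=
  Finsupp.lmapDomain R R (P.face α n i)

/-- The linear extension of the connection map `Γ_i^β` to the free `R`-module on the cubes. -/
noncomputable def Gmap (P : PrecubicalConn) (R : Type*) [CommRing R] (β : Bool) (n i : ℕ) :
    (P.K n →₀ R) →ₗ[R] (P.K (n + 1) →₀ R) :=
  Finsupp.lmapDomain R R (P.conn β n i)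

/-- The cubical boundary operator `∂ σ = ∑_{i=1}^{n+1} (-1)^i (f_i^- σ - f_i^+ σ)`. -/
noncomputable def bdry (P : PrecubicalConn) (R : Type*) [CommRing R] (n : ℕ) :
    (P.K (n + 1) →₀ R) →ₗ[R] (P.K n →₀ R) :=
  ∑ i ∈ Finset.Icc 1 (n + 1), ((-1 : R) ^ i) • (Fmap P R false n i - Fmap P R true n i)

/-- The submodule generated by the degenerate cubes. -/
noncomputable def degenSub (P : PrecubicalConn) (R : Type*) [CommRing R] (n : ℕ) :
    Submodule R (P.K n →₀ R) :=
  Submodule.span R {x | ∃ σ : P.K n, P.Degenerate σ ∧ x = Finsupp.single σ 1}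

/-- The submodule generated by the connection cubes. -/
noncomputable def connSub (P : PrecubicalConn) (R : Type*) [CommRing R] (n : ℕ) :
    Submodule R (P.K n →₀ R) :=
  Submodule.span R {x | ∃ σ : P.K n, P.IsConn σ ∧ x = Finsupp.single σ 1}

/-- The sign `±1` associated to `β ∈ {+,-}`. -/
def sgn (R : Type*) [CommRing R] (β : Bool) : R := if β then 1 else -1

/-!
The faces `f_1^α` and `f_2^α` of `Γ_1^β τ` coincide (both are `τ` when `α = β` and `ε_1 f_1^α τ`
otherwise), so the first two terms of `∂ Γ_1^β τ` cancel. For `i ≥ 2` the face identity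
`f_{i+1}^α Γ_1^β = Γ_1^β f_i^α` turns the remaining terms into `-Γ_1^β` applied to the terms of
`∑_{i ≥ 2} (-1)^i (f_i^- - f_i^+) τ`, the sign coming from the index shift. Hence the identity
holds already in the free module, before dividing out the degenerate cubes.
-/

open Finset

namespace PrecubicalConn

variable (P : PrecubicalConn) (R : Type*) [CommRing R]

@[simp]
lemma Fmap_single (α : Bool) (n i : ℕ) (σ : P.K (n + 1)) (r : R) :
    Fmap P R α n i (Finsupp.single σ r) = Finsupp.single (P.face α n i σ) r :=
  Finsupp.mapDomain_single

@[simp]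
lemma Gmap_single (β : Bool) (n i : ℕ) (σ : P.K n) (r : R) :
    Gmap P R β n i (Finsupp.single σ r) = Finsupp.single (P.conn β n i σ) r :=
  Finsupp.mapDomain_single

lemma bdry_single (n : ℕ) (σ : P.K (n + 1)) :
    bdry P R n (Finsupp.single σ 1) = ∑ i ∈ Icc 1 (n + 1), (-1 : R) ^ i •
      (Finsupp.single (P.face false n i σ) 1 - Finsupp.single (P.face true n i σ) 1) := by
  simp [bdry]

variable {P}

lemma face_conn_eq_face_succ_conn (hP : CubicalConnAxioms P) (α β : Bool) {n j : ℕ}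
    (σ : P.K (n + 1)) (hj : 1 ≤ j) (hjn : j ≤ n + 1) :
    P.face α (n + 1) j (P.conn β (n + 1) j σ) =
      P.face α (n + 1) (j + 1) (P.conn β (n + 1) j σ) := by
  by_cases hαβ : α = β
  · subst hαβ
    rw [hP.face_conn_self α (n + 1) j j σ hj hjn (.inl rfl),
      hP.face_conn_self α (n + 1) (j + 1) j σ hj hjn (.inr rfl)]
  · rw [hP.face_conn_opp α β n j j σ hj hjn (.inl rfl) hαβ,
      hP.face_conn_opp α β n (j + 1) j σ hj hjn (.inr rfl) hαβ]

lemma bdry_single_conn_one (hP : CubicalConnAxioms P) (n : ℕ) (β : Bool) (τ : P.K (n + 1)) :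
    bdry P R (n + 1) (Finsupp.single (P.conn β (n + 1) 1 τ) 1)
      = - Gmap P R β n 1 (∑ i ∈ Icc 2 (n + 1),
          ((-1 : R) ^ i) • ((Fmap P R false n i - Fmap P R true n i) (Finsupp.single τ 1))) := by
  set term : ℕ → (P.K (n + 1) →₀ R) := fun i => (-1 : R) ^ i •
    (Finsupp.single (P.face false (n + 1) i (P.conn β (n + 1) 1 τ)) 1 -
      Finsupp.single (P.face true (n + 1) i (P.conn β (n + 1) 1 τ)) 1)
  have cancel : term 1 + term 2 = 0 := by
    simp only [term, face_conn_eq_face_succ_conn hP _ β τ le_rfl (by omega)]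
    simp [pow_two]
  have term_succ (i : ℕ) (hi : i ∈ Icc 2 (n + 1)) : term (i + 1) = - Gmap P R β n 1
      ((-1 : R) ^ i • ((Fmap P R false n i - Fmap P R true n i) (Finsupp.single τ 1))) := by
    rw [mem_Icc] at hi
    simp only [term, hP.face_conn_gt _ β n (i + 1) 1 τ le_rfl (by omega) (by omega),
      Nat.add_sub_cancel]
    simp [pow_succ]
  calc bdry P R (n + 1) (Finsupp.single (P.conn β (n + 1) 1 τ) 1)
      = ∑ i ∈ Icc 1 (n + 2), term i := bdry_single P R (n + 1) _
    _ = term 1 + (term 2 + ∑ i ∈ Icc 3 (n + 2), term i) := by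
        rw [← add_sum_Ioc_eq_sum_Icc (by omega), ← Icc_add_one_left_eq_Ioc,
          ← add_sum_Ioc_eq_sum_Icc (by omega), ← Icc_add_one_left_eq_Ioc]
        rfl
    _ = ∑ i ∈ Icc 2 (n + 1), term (i + 1) := by
        rw [← add_assoc, cancel, zero_add, ← map_add_right_Icc 2 (n + 1) 1, sum_map]
        rfl
    _ = _ := by rw [map_sum, ← sum_neg_distrib]; exact sum_congr rfl term_succ

end PrecubicalConn

/-- Theorem 3.1(i): in the non-degenerate chain complex,
`∂ Γ_1^β τ = - Γ_1^β (∑_{i=2}^{n} (-1)^i (f_i^- - f_i^+) τ)`. -/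
theorem boundary_conn_one (P : PrecubicalConn) (hP : CubicalConnAxioms P)
    (R : Type*) [CommRing R] (n : ℕ) (β : Bool) (τ : P.K (n + 1)) :
    bdry P R (n + 1) (Finsupp.single (P.conn β (n + 1) 1 τ) 1)
      - (- Gmap P R β n 1 (∑ i ∈ Finset.Icc 2 (n + 1),
          ((-1 : R) ^ i) • ((Fmap P R false n i - Fmap P R true n i) (Finsupp.single τ 1))))
      ∈ degenSub P R (n + 1) := by
  rw [PrecubicalConn.bdry_single_conn_one R hP, sub_self]
  exact zero_mem _
end

section
/- In a cubical set with connections, for any singular n-cube τ, β ∈ {+,−}, and 1 < t < n: ∂_{n+1} Γ_t^β(τ) = Γ_{t-1}^β Σ_{i=1}^{t-1} (-1)^i (f_i^- − f_i^+)(τ) − Γ_t^β Σ_{i=t+1}^n (-1)^i (f_i^- − f_i^+)(τ). -/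
/-! Every face `f_i^α Γ_t^β τ` with `i ∉ {t, t+1}` is again a connection of a face of `τ`:
`Γ_{t-1}^β f_i^α τ` for `i < t`, and `Γ_t^β f_{i-1}^α τ` for `i > t + 1`, where the shift of the
index flips the sign `(-1)^i`. The faces at `t` and `t + 1` coincide, so their terms cancel. Hence
the identity holds exactly in the free module, before passing to the quotient by degenerate
cubes. -/

open Finset

theorem Finset.sum_Icc_one_eq_add_pair_add {M : Type*} [AddCommMonoid M] (f : ℕ → M) {t m : ℕ}
    (ht : 1 ≤ t) (htm : t ≤ m) :
    ∑ i ∈ Icc 1 (m + 1), f i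
      = ∑ i ∈ Icc 1 (t - 1), f i + (f t + f (t + 1)) + ∑ i ∈ Icc (t + 1) m, f (i + 1) := by
  obtain ⟨s, rfl⟩ : ∃ s, t = s + 1 := ⟨t - 1, by omega⟩
  have hshift : ∑ i ∈ Icc (s + 2) m, f (i + 1) = ∑ i ∈ Ioc (s + 2) (m + 1), f i := by
    rw [← Icc_add_one_left_eq_Ioc, ← map_add_right_Icc _ _ 1, sum_map]; rfl
  have hpair : ∑ i ∈ Ioc s (s + 2), f i = f (s + 1) + f (s + 2) := by
    rw [← sum_Ioc_consecutive f (Nat.le_succ s) (Nat.le_succ _), Nat.Ioc_succ_singleton,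
      Nat.Ioc_succ_singleton, sum_singleton, sum_singleton]
  have hIcc : ∀ b, Icc 1 b = Ioc 0 b := Icc_add_one_left_eq_Ioc 0
  rw [Nat.add_sub_cancel, hshift, ← hpair, hIcc, hIcc,
    sum_Ioc_consecutive f (Nat.zero_le s) (Nat.le_add_right s 2),
    sum_Ioc_consecutive f (Nat.zero_le _) (by omega : s + 2 ≤ m + 1)]

section Chains

variable (P : PrecubicalConn) (R : Type*) [CommRing R]

noncomputable def faceDiff (n i : ℕ) (σ : P.K (n + 1)) : P.K n →₀ R :=
  Finsupp.single (P.face false n i σ) 1 - Finsupp.single (P.face true n i σ) 1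

theorem Fmap_sub_Fmap_single (n i : ℕ) (σ : P.K (n + 1)) :
    (Fmap P R false n i - Fmap P R true n i) (Finsupp.single σ 1) = faceDiff P R n i σ := by
  simp [Fmap, faceDiff]

theorem bdry_single (n : ℕ) (σ : P.K (n + 1)) :
    bdry P R n (Finsupp.single σ 1) = ∑ i ∈ Icc 1 (n + 1), (-1 : R) ^ i • faceDiff P R n i σ := by
  simp only [bdry, LinearMap.sum_apply, LinearMap.smul_apply, Fmap_sub_Fmap_single]

theorem Gmap_faceDiff (β : Bool) (n j i : ℕ) (σ : P.K (n + 1)) :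
    Gmap P R β n j (faceDiff P R n i σ) = Finsupp.single (P.conn β n j (P.face false n i σ)) 1
      - Finsupp.single (P.conn β n j (P.face true n i σ)) 1 := by
  simp [Gmap, faceDiff, Finsupp.mapDomain_sub]

variable {P} (hP : CubicalConnAxioms P)
include hP

theorem face_conn_succ_eq (α β : Bool) {n j : ℕ} (σ : P.K (n + 1)) (hj : 1 ≤ j)
    (hjn : j ≤ n + 1) :
    P.face α (n + 1) (j + 1) (P.conn β (n + 1) j σ)
      = P.face α (n + 1) j (P.conn β (n + 1) j σ) := by
  by_cases hαβ : α = β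
  · subst hαβ
    rw [hP.face_conn_self α (n + 1) (j + 1) j σ hj hjn (Or.inr rfl),
      hP.face_conn_self α (n + 1) j j σ hj hjn (Or.inl rfl)]
  · rw [hP.face_conn_opp α β n (j + 1) j σ hj hjn (Or.inr rfl) hαβ,
      hP.face_conn_opp α β n j j σ hj hjn (Or.inl rfl) hαβ]

theorem faceDiff_conn_succ_eq (β : Bool) {n j : ℕ} (σ : P.K (n + 1)) (hj : 1 ≤ j)
    (hjn : j ≤ n + 1) :
    faceDiff P R (n + 1) (j + 1) (P.conn β (n + 1) j σ)
      = faceDiff P R (n + 1) j (P.conn β (n + 1) j σ) := by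
  simp only [faceDiff, face_conn_succ_eq hP _ β σ hj hjn]

theorem faceDiff_conn_of_lt (β : Bool) {n i j : ℕ} (σ : P.K (n + 1)) (hi : 1 ≤ i) (hij : i < j)
    (hjn : j ≤ n + 1) :
    faceDiff P R (n + 1) i (P.conn β (n + 1) j σ) = Gmap P R β n (j - 1) (faceDiff P R n i σ) := by
  rw [Gmap_faceDiff]
  simp only [faceDiff, hP.face_conn_lt _ β n i j σ hi hij hjn]

theorem faceDiff_conn_of_gt (β : Bool) {n i j : ℕ} (σ : P.K (n + 1)) (hj : 1 ≤ j) (hji : j < i)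
    (hin : i ≤ n + 1) :
    faceDiff P R (n + 1) (i + 1) (P.conn β (n + 1) j σ) = Gmap P R β n j (faceDiff P R n i σ) := by
  rw [Gmap_faceDiff]
  simp only [faceDiff, hP.face_conn_gt _ β n (i + 1) j σ hj (by omega) (by omega),
    Nat.add_sub_cancel]

theorem bdry_single_conn (β : Bool) {n t : ℕ} (τ : P.K (n + 1)) (ht : 1 ≤ t) (htn : t ≤ n + 1) :
    bdry P R (n + 1) (Finsupp.single (P.conn β (n + 1) t τ) 1)
      = Gmap P R β n (t - 1) (∑ i ∈ Icc 1 (t - 1),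
            (-1 : R) ^ i • (Fmap P R false n i - Fmap P R true n i) (Finsupp.single τ 1))
        - Gmap P R β n t (∑ i ∈ Icc (t + 1) (n + 1),
            (-1 : R) ^ i • (Fmap P R false n i - Fmap P R true n i) (Finsupp.single τ 1)) := by
  set Γ := P.conn β (n + 1) t τ
  have hpair : (-1 : R) ^ t • faceDiff P R (n + 1) t Γ
      + (-1 : R) ^ (t + 1) • faceDiff P R (n + 1) (t + 1) Γ = 0 := by
    rw [faceDiff_conn_succ_eq R hP β τ ht htn, pow_succ, mul_neg_one, neg_smul, add_neg_cancel]
  have hlow : ∑ i ∈ Icc 1 (t - 1), (-1 : R) ^ i • faceDiff P R (n + 1) i Γ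
      = Gmap P R β n (t - 1) (∑ i ∈ Icc 1 (t - 1),
          (-1 : R) ^ i • (Fmap P R false n i - Fmap P R true n i) (Finsupp.single τ 1)) := by
    rw [map_sum]
    refine sum_congr rfl fun i hi => ?_
    rw [mem_Icc] at hi
    rw [Fmap_sub_Fmap_single, map_smul, faceDiff_conn_of_lt R hP β τ hi.1 (by omega) htn]
  have hhigh : ∑ i ∈ Icc (t + 1) (n + 1), (-1 : R) ^ (i + 1) • faceDiff P R (n + 1) (i + 1) Γ
      = -Gmap P R β n t (∑ i ∈ Icc (t + 1) (n + 1),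
          (-1 : R) ^ i • (Fmap P R false n i - Fmap P R true n i) (Finsupp.single τ 1)) := by
    rw [map_sum, ← sum_neg_distrib]
    refine sum_congr rfl fun i hi => ?_
    rw [mem_Icc] at hi
    rw [Fmap_sub_Fmap_single, map_smul, faceDiff_conn_of_gt R hP β τ ht (by omega) hi.2,
      pow_succ, mul_neg_one, neg_smul]
  rw [bdry_single, sum_Icc_one_eq_add_pair_add _ ht htn, hpair, hlow, hhigh, add_zero,
    sub_eq_add_neg]

end Chains

/-- Theorem 3.1(iii): for `1 < t < n`, in the non-degenerate chain complex,
`∂ Γ_t^β τ = Γ_{t-1}^β ∑_{i=1}^{t-1} (-1)^i (f_i^- - f_i^+) τ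
  - Γ_t^β ∑_{i=t+1}^{n} (-1)^i (f_i^- - f_i^+) τ`. -/
theorem boundary_conn_middle (P : PrecubicalConn) (hP : CubicalConnAxioms P)
    (R : Type*) [CommRing R] (n t : ℕ) (β : Bool) (τ : P.K (n + 1))
    (ht1 : 1 < t) (ht2 : t < n + 1) :
    bdry P R (n + 1) (Finsupp.single (P.conn β (n + 1) t τ) 1)
      - (Gmap P R β n (t - 1) (∑ i ∈ Finset.Icc 1 (t - 1),
            ((-1 : R) ^ i) • ((Fmap P R false n i - Fmap P R true n i) (Finsupp.single τ 1)))
         - Gmap P R β n t (∑ i ∈ Finset.Icc (t + 1) (n + 1),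
            ((-1 : R) ^ i) • ((Fmap P R false n i - Fmap P R true n i) (Finsupp.single τ 1))))
      ∈ degenSub P R (n + 1) := by
  rw [bdry_single_conn R hP β τ ht1.le ht2.le, sub_self]
  exact zero_mem _
end

section
/- In a cubical set with connections, for a singular n-cube τ with n ≥ 2 and β ∈ {+,−}: ∂_{n+1} Σ_{j=1}^{n} (-1)^j Γ_j^β(τ) + Σ_{j=1}^{n-1} (-1)^j Γ_j^β ∂_n(τ) = 0. -/
/-!
Expanding `∂ (∑ⱼ (-1)ʲ Γⱼ τ)` gives the terms `(-1)^(i+j) (fᵢ⁻ - fᵢ⁺) Γⱼ τ`. For `i ∈ {j, j+1}` the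
faces `fᵢ^α Γⱼ τ` do not depend on the choice of `i` (they are `τ` or a degeneracy of a face of `τ`),
so these terms cancel in pairs. For `i < j` and `i > j + 1` the face–connection relations turn
`fᵢ Γⱼ` into `Γⱼ₋₁ fᵢ` resp. `Γⱼ fᵢ₋₁`, and the reindexing `(j, i) ↦ (j - 1, i)` resp. `(j, i - 1)`
matches these terms bijectively, with opposite signs, with those of `∑ⱼ (-1)ʲ Γⱼ ∂ τ`. Hence the
chain in question is already zero, a fortiori degenerate.
-/

open Finset

section

variable (R : Type*) [Ring R] {M : Type*} [AddCommGroup M] [Module R M]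

theorem sum_sign_smul_diag_eq_zero (n : ℕ) (g : ℕ → ℕ → M)
    (hdiag : ∀ j, 1 ≤ j → j ≤ n + 1 → g j j = g j (j + 1)) :
    ∑ p ∈ (Icc 1 (n + 1) ×ˢ Icc 1 (n + 2)).filter (fun p => p.2 = p.1 ∨ p.2 = p.1 + 1),
      (-1 : R) ^ (p.1 + p.2) • g p.1 p.2 = 0 := by
  refine sum_involution (fun p _ => if p.2 = p.1 then (p.1, p.1 + 1) else (p.1, p.1))
    ?_ ?_ ?_ ?_
  · rintro ⟨j, i⟩ hp
    simp only [mem_filter, mem_product, mem_Icc] at hp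
    obtain ⟨⟨⟨hj, hjn⟩, -⟩, rfl | rfl⟩ := hp
    · simp only [if_true, hdiag _ hj hjn, ← add_assoc, pow_succ, mul_neg_one, neg_smul,
        add_neg_cancel]
    · simp only [show j + 1 ≠ j by omega, if_false, hdiag _ hj hjn, ← add_assoc, pow_succ,
        mul_neg_one, neg_smul, neg_add_cancel]
  · rintro ⟨j, i⟩ _ _
    dsimp only
    split_ifs <;> simp only [ne_eq, Prod.mk.injEq] <;> omega
  · rintro ⟨j, i⟩ hp
    simp only [mem_filter, mem_product, mem_Icc] at hp ⊢
    split_ifs <;> omega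
  · rintro ⟨j, i⟩ hp
    simp only [mem_filter, mem_product, mem_Icc] at hp
    split_ifs <;> simp_all

theorem sum_sign_smul_offDiag_eq_neg (n : ℕ) (g h : ℕ → ℕ → M)
    (hlt : ∀ i j, 1 ≤ i → i < j → j ≤ n + 1 → g j i = h (j - 1) i)
    (hgt : ∀ i j, 1 ≤ j → j + 1 < i → i ≤ n + 2 → g j i = h j (i - 1)) :
    ∑ p ∈ (Icc 1 (n + 1) ×ˢ Icc 1 (n + 2)).filter (fun p => ¬(p.2 = p.1 ∨ p.2 = p.1 + 1)),
      (-1 : R) ^ (p.1 + p.2) • g p.1 p.2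
      = -∑ p ∈ Icc 1 n ×ˢ Icc 1 (n + 1), (-1 : R) ^ (p.2 + p.1) • h p.1 p.2 := by
  rw [← sum_neg_distrib]
  symm
  refine sum_nbij' (fun p => if p.2 ≤ p.1 then (p.1 + 1, p.2) else (p.1, p.2 + 1))
    (fun p => if p.2 < p.1 then (p.1 - 1, p.2) else (p.1, p.2 - 1)) ?_ ?_ ?_ ?_ ?_
  · rintro ⟨j, i⟩ hp
    simp only [mem_product, mem_Icc] at hp
    split_ifs <;> simp only [mem_filter, mem_product, mem_Icc] <;> omega
  · rintro ⟨j, i⟩ hp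
    simp only [mem_filter, mem_product, mem_Icc] at hp
    split_ifs <;> simp only [mem_product, mem_Icc] <;> omega
  · rintro ⟨j, i⟩ hp
    simp only [mem_product, mem_Icc] at hp
    split_ifs <;> simp_all [Prod.ext_iff]; omega
  · rintro ⟨j, i⟩ hp
    simp only [mem_filter, mem_product, mem_Icc] at hp
    split_ifs <;> simp_all [Prod.ext_iff] <;> omega
  · rintro ⟨j, i⟩ hp
    simp only [mem_product, mem_Icc] at hp
    split_ifs with hij
    · rw [hlt i (j + 1) hp.2.1 (by omega) (by omega), Nat.add_sub_cancel,
        show j + 1 + i = i + j + 1 by omega, pow_succ, mul_neg_one, neg_smul]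
    · rw [hgt (i + 1) j hp.1.1 (by omega) (by omega), Nat.add_sub_cancel,
        show j + (i + 1) = i + j + 1 by omega, pow_succ, mul_neg_one, neg_smul]

theorem alternating_double_sums_cancel (n : ℕ) (g h : ℕ → ℕ → M)
    (hdiag : ∀ j, 1 ≤ j → j ≤ n + 1 → g j j = g j (j + 1))
    (hlt : ∀ i j, 1 ≤ i → i < j → j ≤ n + 1 → g j i = h (j - 1) i)
    (hgt : ∀ i j, 1 ≤ j → j + 1 < i → i ≤ n + 2 → g j i = h j (i - 1)) :
    ∑ j ∈ Icc 1 (n + 1), ∑ i ∈ Icc 1 (n + 2), (-1 : R) ^ (j + i) • g j i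
      + ∑ i ∈ Icc 1 (n + 1), ∑ j ∈ Icc 1 n, (-1 : R) ^ (i + j) • h j i = 0 := by
  rw [sum_comm (s := Icc 1 (n + 1)) (t := Icc 1 n),
    ← sum_product' (f := fun j i => (-1 : R) ^ (j + i) • g j i),
    ← sum_product' (f := fun j i => (-1 : R) ^ (i + j) • h j i),
    ← sum_filter_add_sum_filter_not _ (fun p : ℕ × ℕ => p.2 = p.1 ∨ p.2 = p.1 + 1),
    sum_sign_smul_diag_eq_zero R n g hdiag, sum_sign_smul_offDiag_eq_neg R n g h hlt hgt,
    zero_add, neg_add_cancel]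

end

noncomputable def altConnSum (P : PrecubicalConn) (R : Type*) [CommRing R] (β : Bool) (n : ℕ) :
    (P.K n →₀ R) →ₗ[R] (P.K (n + 1) →₀ R) :=
  ∑ j ∈ Icc 1 n, ((-1 : R) ^ j) • Gmap P R β n j

section

variable {P : PrecubicalConn} (R : Type*) [CommRing R]

theorem Fmap_Gmap_of_lt (hP : CubicalConnAxioms P) (α β : Bool) {n i j : ℕ} (hi : 1 ≤ i)
    (hij : i < j) (hj : j ≤ n + 1) (x : P.K (n + 1) →₀ R) :
    Fmap P R α (n + 1) i (Gmap P R β (n + 1) j x) = Gmap P R β n (j - 1) (Fmap P R α n i x) := by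
  simp only [Fmap, Gmap, Finsupp.lmapDomain_apply, ← Finsupp.mapDomain_comp]
  congr 1
  funext σ
  exact hP.face_conn_lt α β n i j σ hi hij hj

theorem Fmap_Gmap_of_succ_lt (hP : CubicalConnAxioms P) (α β : Bool) {n i j : ℕ} (hj : 1 ≤ j)
    (hji : j + 1 < i) (hi : i ≤ n + 2) (x : P.K (n + 1) →₀ R) :
    Fmap P R α (n + 1) i (Gmap P R β (n + 1) j x) = Gmap P R β n j (Fmap P R α n (i - 1) x) := by
  simp only [Fmap, Gmap, Finsupp.lmapDomain_apply, ← Finsupp.mapDomain_comp]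
  congr 1
  funext σ
  exact hP.face_conn_gt α β n i j σ hj hji hi

theorem Fmap_self_Gmap_eq_Fmap_succ_Gmap (hP : CubicalConnAxioms P) (α β : Bool) {n j : ℕ}
    (hj : 1 ≤ j) (hjn : j ≤ n + 1) (x : P.K (n + 1) →₀ R) :
    Fmap P R α (n + 1) j (Gmap P R β (n + 1) j x)
      = Fmap P R α (n + 1) (j + 1) (Gmap P R β (n + 1) j x) := by
  simp only [Fmap, Gmap, Finsupp.lmapDomain_apply, ← Finsupp.mapDomain_comp]
  congr 1
  funext σ
  by_cases hαβ : α = β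
  · subst hαβ
    simp only [Function.comp_apply, hP.face_conn_self α (n + 1) j j σ hj hjn (Or.inl rfl),
      hP.face_conn_self α (n + 1) (j + 1) j σ hj hjn (Or.inr rfl)]
  · simp only [Function.comp_apply, hP.face_conn_opp α β n j j σ hj hjn (Or.inl rfl) hαβ,
      hP.face_conn_opp α β n (j + 1) j σ hj hjn (Or.inr rfl) hαβ]

theorem bdry_altConnSum_add_altConnSum_bdry (hP : CubicalConnAxioms P) (β : Bool) (n : ℕ)
    (x : P.K (n + 1) →₀ R) :
    bdry P R (n + 1) (altConnSum P R β (n + 1) x) + altConnSum P R β n (bdry P R n x) = 0 := by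
  simp only [bdry, altConnSum, LinearMap.sum_apply, LinearMap.smul_apply, map_sum, map_smul,
    smul_sum, smul_smul, ← pow_add]
  refine alternating_double_sums_cancel R n _ _ (fun j hj hjn => ?_) (fun i j hi hij hj => ?_)
    (fun i j hj hji hi => ?_)
  · simp only [LinearMap.sub_apply, Fmap_self_Gmap_eq_Fmap_succ_Gmap R hP _ β hj hjn]
  · simp only [LinearMap.sub_apply, map_sub, Fmap_Gmap_of_lt R hP _ β hi hij hj]
  · simp only [LinearMap.sub_apply, map_sub, Fmap_Gmap_of_succ_lt R hP _ β hj hji hi]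

end

theorem alternating_conn_full_sum_general (P : PrecubicalConn) (hP : CubicalConnAxioms P)
    (R : Type*) [CommRing R] (n : ℕ) (β : Bool) (τ : P.K (n + 1)) :
    (bdry P R (n + 1) (∑ j ∈ Finset.Icc 1 (n + 1),
          ((-1 : R) ^ j) • Finsupp.single (P.conn β (n + 1) j τ) 1)
        + ∑ j ∈ Finset.Icc 1 n,
          ((-1 : R) ^ j) • Gmap P R β n j (bdry P R n (Finsupp.single τ 1)))
      ∈ degenSub P R (n + 1) := by
  have h := bdry_altConnSum_add_altConnSum_bdry R hP β n (Finsupp.single τ 1)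
  simp only [altConnSum, LinearMap.sum_apply, LinearMap.smul_apply, Gmap,
    Finsupp.lmapDomain_apply, Finsupp.mapDomain_single] at h ⊢
  rw [h]
  exact zero_mem _

/-- Corollary 3.3(iv): for `n ≥ 2`, in the non-degenerate chain complex,
`∂ ∑_{j=1}^{n} (-1)^j Γ_j^β τ + ∑_{j=1}^{n-1} (-1)^j Γ_j^β ∂ τ = 0`. -/
theorem alternating_conn_full_sum (P : PrecubicalConn) (hP : CubicalConnAxioms P)
    (R : Type*) [CommRing R] (n : ℕ) (hn : 1 ≤ n) (β : Bool) (τ : P.K (n + 1)) :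
    (bdry P R (n + 1) (∑ j ∈ Finset.Icc 1 (n + 1),
          ((-1 : R) ^ j) • Finsupp.single (P.conn β (n + 1) j τ) 1)
        + ∑ j ∈ Finset.Icc 1 n,
          ((-1 : R) ^ j) • Gmap P R β n j (bdry P R n (Finsupp.single τ 1)))
      ∈ degenSub P R (n + 1) :=
  alternating_conn_full_sum_general P hP R n β τ
end

section
/- In a cubical set with connections, if a non-degenerate n-cube θ satisfies θ = Γ_t^α(σ) = Γ_s^β(τ) with s > t+1, then θ = Γ_t^α(Γ_{s-1}^β(δ)) = Γ_s^β(Γ_t^α(δ)) where δ = f_t^α(τ) = f_{t+1}^α(τ) = f_s^β(σ) = f_{s-1}^β(σ). -/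
/-!
Apply the faces `f_s^β`, `f_{s+1}^β` and `f_t^α` to `θ`. Evaluated on `Γ_s^β τ` they return `τ`
(resp. `σ` on `Γ_t^α σ`), while the face–connection identities for far-apart indices move them
past the other connection. This gives `τ = Γ_t^α (f_{s-1}^β σ) = Γ_t^α (f_s^β σ)` and
`σ = Γ_{s-1}^β (f_t^α τ)`; since `Γ_t^α` has the left inverse `f_t^α`, all four faces agree.
-/

namespace CubicalConnAxioms

variable {P : PrecubicalConn}

theorem face_leftInverse_conn (hP : CubicalConnAxioms P) (α : Bool) {n t : ℕ}
    (ht1 : 1 ≤ t) (htn : t ≤ n) : Function.LeftInverse (P.face α n t) (P.conn α n t) :=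
  fun x => hP.face_conn_self α n t t x ht1 htn (Or.inl rfl)

theorem conn_injective (hP : CubicalConnAxioms P) (α : Bool) {n t : ℕ}
    (ht1 : 1 ≤ t) (htn : t ≤ n) : Function.Injective (P.conn α n t) :=
  (hP.face_leftInverse_conn α ht1 htn).injective

theorem eq_conn_face_of_conn_eq_conn_right (hP : CubicalConnAxioms P) {n s t : ℕ} {α β : Bool}
    {σ τ : P.K (n + 1)} (ht1 : 1 ≤ t) (hsn : s ≤ n + 1) (hts : t + 1 < s)
    (h : P.conn α (n + 1) t σ = P.conn β (n + 1) s τ) :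
    τ = P.conn α n t (P.face β n (s - 1) σ) :=
  calc τ = P.face β (n + 1) s (P.conn β (n + 1) s τ) :=
        (hP.face_conn_self β (n + 1) s s τ (by omega) hsn (Or.inl rfl)).symm
    _ = P.conn α n t (P.face β n (s - 1) σ) := by
        rw [← h, hP.face_conn_gt β α n s t σ ht1 hts (by omega)]

theorem eq_conn_face_of_conn_eq_conn_left (hP : CubicalConnAxioms P) {n s t : ℕ} {α β : Bool}
    {σ τ : P.K (n + 1)} (ht1 : 1 ≤ t) (hsn : s ≤ n + 1) (hts : t + 1 < s)
    (h : P.conn α (n + 1) t σ = P.conn β (n + 1) s τ) :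
    σ = P.conn β n (s - 1) (P.face α n t τ) :=
  calc σ = P.face α (n + 1) t (P.conn α (n + 1) t σ) :=
        (hP.face_conn_self α (n + 1) t t σ ht1 (by omega) (Or.inl rfl)).symm
    _ = P.conn β n (s - 1) (P.face α n t τ) := by
        rw [h, hP.face_conn_lt α β n t s τ ht1 (by omega) hsn]

theorem face_eq_face_pred_of_conn_eq_conn (hP : CubicalConnAxioms P) {n s t : ℕ} {α β : Bool}
    {σ τ : P.K (n + 1)} (ht1 : 1 ≤ t) (hsn : s ≤ n + 1) (hts : t + 1 < s)
    (h : P.conn α (n + 1) t σ = P.conn β (n + 1) s τ) :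
    P.face β n s σ = P.face β n (s - 1) σ := by
  refine hP.conn_injective α ht1 (by omega : t ≤ n) ?_
  calc P.conn α n t (P.face β n s σ) = P.face β (n + 1) (s + 1) (P.conn α (n + 1) t σ) := by
        rw [hP.face_conn_gt β α n (s + 1) t σ ht1 (by omega) (by omega), Nat.add_sub_cancel]
    _ = τ := by rw [h, hP.face_conn_self β (n + 1) (s + 1) s τ (by omega) hsn (Or.inr rfl)]
    _ = P.conn α n t (P.face β n (s - 1) σ) :=
        hP.eq_conn_face_of_conn_eq_conn_right ht1 hsn hts h

end CubicalConnAxioms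

theorem conn_representation_commute_general (P : PrecubicalConn) (hP : CubicalConnAxioms P)
    (n s t : ℕ) (α β : Bool) (σ τ : P.K (n + 1)) (θ : P.K (n + 2))
    (ht1 : 1 ≤ t) (hs2 : s ≤ n + 1) (hst : t + 1 < s)
    (h1 : θ = P.conn α (n + 1) t σ) (h2 : θ = P.conn β (n + 1) s τ) :
    ∃ δ : P.K n,
      δ = P.face α n t τ ∧ δ = P.face α n (t + 1) τ ∧
      δ = P.face β n s σ ∧ δ = P.face β n (s - 1) σ ∧
      θ = P.conn α (n + 1) t (P.conn β n (s - 1) δ) ∧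
      θ = P.conn β (n + 1) s (P.conn α n t δ) := by
  have h : P.conn α (n + 1) t σ = P.conn β (n + 1) s τ := h1.symm.trans h2
  set δ := P.face β n (s - 1) σ
  have hτ : τ = P.conn α n t δ := hP.eq_conn_face_of_conn_eq_conn_right ht1 hs2 hst h
  have hft : P.face α n t τ = δ := by
    rw [hτ]; exact hP.face_conn_self α n t t δ ht1 (by omega) (Or.inl rfl)
  have hft1 : P.face α n (t + 1) τ = δ := by
    rw [hτ]; exact hP.face_conn_self α n (t + 1) t δ ht1 (by omega) (Or.inr rfl)
  have hσ : σ = P.conn β n (s - 1) δ := by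
    rw [← hft]; exact hP.eq_conn_face_of_conn_eq_conn_left ht1 hs2 hst h
  exact ⟨δ, hft.symm, hft1.symm, (hP.face_eq_face_pred_of_conn_eq_conn ht1 hs2 hst h).symm, rfl,
    by rw [h1, hσ], by rw [h2, hτ]⟩

/-- Lemma 3.7(ii): if a non-degenerate cube `θ` has two connection representations
`θ = Γ_t^α σ = Γ_s^β τ` with `s > t + 1`, then
`θ = Γ_t^α (Γ_{s-1}^β δ) = Γ_s^β (Γ_t^α δ)` where
`δ = f_t^α τ = f_{t+1}^α τ = f_s^β σ = f_{s-1}^β σ`. -/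
theorem conn_representation_commute (P : PrecubicalConn) (hP : CubicalConnAxioms P)
    (n s t : ℕ) (α β : Bool) (σ τ : P.K (n + 1)) (θ : P.K (n + 2))
    (hθ : ¬ P.Degenerate θ)
    (ht1 : 1 ≤ t) (hs2 : s ≤ n + 1) (hst : t + 1 < s)
    (h1 : θ = P.conn α (n + 1) t σ) (h2 : θ = P.conn β (n + 1) s τ) :
    ∃ δ : P.K n,
      δ = P.face α n t τ ∧ δ = P.face α n (t + 1) τ ∧
      δ = P.face β n s σ ∧ δ = P.face β n (s - 1) σ ∧
      θ = P.conn α (n + 1) t (P.conn β n (s - 1) δ) ∧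
      θ = P.conn β (n + 1) s (P.conn α n t δ) :=
  conn_representation_commute_general P hP n s t α β σ τ θ ht1 hs2 hst h1 h2
end

section
/- In a cubical set with connections, every n-cube τ has a unique maximal face ρ that is neither degenerate nor a connection, and if τ is degenerate or a connection then ρ is a proper subface and τ = g_k ⋯ g_1(ρ) for suitable degeneracy and connection maps g_1,…,g_k. -/
/-- `FaceOf P τ σ` means that `τ` is an iterated face of `σ` (possibly `τ = σ`). -/
inductive FaceOf (P : PrecubicalConn) : ∀ {k m : ℕ}, P.K k → P.K m → Prop where
  | refl {m : ℕ} (σ : P.K m) : FaceOf P σ σ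
  | step {k m : ℕ} {τ : P.K k} {σ : P.K (m + 1)} (α : Bool) (i : ℕ)
      (h1 : 1 ≤ i) (h2 : i ≤ m + 1) (h : FaceOf P τ (P.face α m i σ)) : FaceOf P τ σ

/-- `DCImage P τ ρ` means that `τ = g_k ⋯ g_1 ρ` for some (possibly empty) sequence of
degeneracy and connection maps `g_1, …, g_k`. -/
inductive DCImage (P : PrecubicalConn) : ∀ {m k : ℕ}, P.K m → P.K k → Prop where
  | refl {m : ℕ} (σ : P.K m) : DCImage P σ σ
  | degen {m k : ℕ} {σ : P.K m} {ρ : P.K k} (i : ℕ) (h1 : 1 ≤ i) (h2 : i ≤ m + 1)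
      (h : DCImage P σ ρ) : DCImage P (P.degen m i σ) ρ
  | conn {m k : ℕ} {σ : P.K m} {ρ : P.K k} (β : Bool) (i : ℕ) (h1 : 1 ≤ i) (h2 : i ≤ m)
      (h : DCImage P σ ρ) : DCImage P (P.conn β m i σ) ρ

/-- `ConnImage P τ ρ` means that `τ = g_k ⋯ g_1 ρ` for some (possibly empty) sequence of
connection maps `g_1, …, g_k`. -/
inductive ConnImage (P : PrecubicalConn) : ∀ {m k : ℕ}, P.K m → P.K k → Prop where
  | refl {m : ℕ} (σ : P.K m) : ConnImage P σ σ
  | conn {m k : ℕ} {σ : P.K m} {ρ : P.K k} (β : Bool) (i : ℕ) (h1 : 1 ≤ i) (h2 : i ≤ m)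
      (h : ConnImage P σ ρ) : ConnImage P (P.conn β m i σ) ρ
/-! If `τ = ε_i σ` is degenerate, the cubical identities move every face map past `ε_i` until
it meets `f_i ε_i = id`, so every non-degenerate face of `τ` is already a face of `σ = f_i^+ τ`.
Likewise, if `τ = Γ_i^β σ`, every non-degenerate non-connection face of `τ` is a face of
`σ = f_i^β τ`, since `f_i^β Γ_i^β = id` and `f^{-β} Γ^β` factors through a degeneracy.
Induction on the dimension therefore produces the maximal such face of `τ`, together with a
way of rebuilding `τ` from it; uniqueness is antisymmetry of the face relation. -/

variable {P : PrecubicalConn}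

namespace FaceOf

theorem dim_le {k m : ℕ} {ρ : P.K k} {σ : P.K m} (h : FaceOf P ρ σ) : k ≤ m := by
  induction h with
  | refl => exact le_rfl
  | step _ _ _ _ _ ih => omega

theorem eq {k : ℕ} {ρ σ : P.K k} (h : FaceOf P ρ σ) : ρ = σ := by
  cases h with
  | refl => rfl
  | step _ _ _ _ h => exact absurd h.dim_le (by omega)

theorem antisymm {k m : ℕ} {ρ : P.K k} {σ : P.K m} (h₁ : FaceOf P ρ σ) (h₂ : FaceOf P σ ρ) :
    k = m ∧ HEq ρ σ := by
  obtain rfl := le_antisymm h₁.dim_le h₂.dim_le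
  exact ⟨rfl, heq_of_eq h₁.eq⟩

theorem of_degen (hP : CubicalConnAxioms P) {k n i : ℕ} {ρ : P.K k} {σ : P.K n}
    (h1 : 1 ≤ i) (h2 : i ≤ n + 1) (h : FaceOf P ρ (P.degen n i σ)) (hnd : ¬ P.Degenerate ρ) :
    FaceOf P ρ σ := by
  induction n using Nat.strong_induction_on generalizing i with
  | _ n ih =>
  rcases h with _ | ⟨α, j, hj1, hj2, h⟩
  · exact absurd ⟨i, h1, h2, by rw [hP.face_degen_eq true n i σ h1 h2]⟩ hnd
  rcases Nat.lt_trichotomy j i with hji | rfl | hji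
  · obtain ⟨m, rfl⟩ : ∃ m, n = m + 1 := ⟨n - 1, by omega⟩
    rw [hP.face_degen_lt α m j i σ hj1 hji h2] at h
    exact step α j hj1 (by omega) (ih m (by omega) (by omega) (by omega) h)
  · rwa [hP.face_degen_eq α n j σ h1 h2] at h
  · obtain ⟨m, rfl⟩ : ∃ m, n = m + 1 := ⟨n - 1, by omega⟩
    rw [hP.face_degen_gt α m j i σ h1 hji hj2] at h
    exact step α (j - 1) (by omega) (by omega) (ih m (by omega) h1 (by omega) h)

theorem of_conn (hP : CubicalConnAxioms P) {k n i : ℕ} {β : Bool} {ρ : P.K k} {σ : P.K n}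
    (h1 : 1 ≤ i) (h2 : i ≤ n) (h : FaceOf P ρ (P.conn β n i σ)) (hnd : ¬ P.Degenerate ρ)
    (hnc : ¬ P.IsConn ρ) : FaceOf P ρ σ := by
  induction n using Nat.strong_induction_on generalizing i with
  | _ n ih =>
  rcases h with _ | ⟨α, j, hj1, hj2, h⟩
  · exact absurd ⟨β, i, σ, h1, h2, rfl⟩ hnc
  by_cases hji : j = i ∨ j = i + 1
  · by_cases hαβ : α = β
    · subst hαβ
      rwa [hP.face_conn_self α n j i σ h1 h2 hji] at h
    · obtain ⟨m, rfl⟩ : ∃ m, n = m + 1 := ⟨n - 1, by omega⟩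
      rw [hP.face_conn_opp α β m j i σ h1 h2 hji hαβ] at h
      exact step α i h1 (by omega) (h.of_degen hP h1 (by omega) hnd)
  obtain ⟨m, rfl⟩ : ∃ m, n = m + 1 := ⟨n - 1, by omega⟩
  rcases Nat.lt_or_gt_of_ne (show j ≠ i by omega) with hlt | hgt
  · rw [hP.face_conn_lt α β m j i σ hj1 hlt h2] at h
    exact step α j hj1 (by omega) (ih m (by omega) (by omega) (by omega) h)
  · rw [hP.face_conn_gt α β m j i σ h1 (by omega) hj2] at h
    exact step α (j - 1) (by omega) (by omega) (ih m (by omega) h1 (by omega) h)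

end FaceOf

def IsMaximalNondegNonconnFace (P : PrecubicalConn) {k n : ℕ} (ρ : P.K k) (τ : P.K n) :
    Prop :=
  FaceOf P ρ τ ∧ ¬ P.Degenerate ρ ∧ ¬ P.IsConn ρ ∧
    ∀ (k' : ℕ) (ρ' : P.K k'), FaceOf P ρ' τ → ¬ P.Degenerate ρ' → ¬ P.IsConn ρ' →
      FaceOf P ρ' ρ

theorem IsMaximalNondegNonconnFace.of_face {k m i : ℕ} {α : Bool} {ρ : P.K k}
    {τ : P.K (m + 1)} (h1 : 1 ≤ i) (h2 : i ≤ m + 1)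
    (hfaces : ∀ (k' : ℕ) (ρ' : P.K k'), FaceOf P ρ' τ → ¬ P.Degenerate ρ' → ¬ P.IsConn ρ' →
      FaceOf P ρ' (P.face α m i τ))
    (h : IsMaximalNondegNonconnFace P ρ (P.face α m i τ)) :
    IsMaximalNondegNonconnFace P ρ τ :=
  ⟨.step α i h1 h2 h.1, h.2.1, h.2.2.1,
    fun k' ρ' hf hnd hnc => h.2.2.2 k' ρ' (hfaces k' ρ' hf hnd hnc) hnd hnc⟩

theorem exists_isMaximalNondegNonconnFace_dcImage (hP : CubicalConnAxioms P) (n : ℕ)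
    (τ : P.K n) : ∃ (k : ℕ) (ρ : P.K k), IsMaximalNondegNonconnFace P ρ τ ∧ DCImage P τ ρ := by
  induction n using Nat.strong_induction_on with
  | _ n ih =>
  by_cases hd : P.Degenerate τ
  · cases n with
    | zero => exact hd.elim
    | succ m =>
      obtain ⟨i, h1, h2, hτ⟩ := hd
      obtain ⟨k, ρ, hmax, hdc⟩ := ih m m.lt_succ_self (P.face true m i τ)
      refine ⟨k, ρ, hmax.of_face h1 h2 fun _ _ hf hnd _ => ?_, ?_⟩
      · rw [hτ] at hf
        exact hf.of_degen hP h1 h2 hnd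
      · rw [hτ]
        exact .degen i h1 h2 hdc
  by_cases hc : P.IsConn τ
  · cases n with
    | zero => exact hc.elim
    | succ m =>
      obtain ⟨β, i, σ, h1, h2, rfl⟩ := hc
      have hσ : P.face β m i (P.conn β m i σ) = σ := hP.face_conn_self β m i i σ h1 h2 (.inl rfl)
      obtain ⟨k, ρ, hmax, hdc⟩ := ih m m.lt_succ_self σ
      refine ⟨k, ρ, (hσ ▸ hmax).of_face h1 (by omega) fun _ _ hf hnd hnc => ?_,
        .conn β i h1 h2 hdc⟩
      rw [hσ]
      exact hf.of_conn hP h1 h2 hnd hnc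
  exact ⟨n, τ, ⟨.refl τ, hd, hc, fun _ _ hf _ _ => hf⟩, .refl τ⟩

/-- Lemma A.2: every cube `τ` has a unique maximal face `ρ` that is neither degenerate
nor a connection; moreover, if `τ` is degenerate or a connection, then `ρ` is a proper
face of `τ` and `τ` is obtained from `ρ` by applying degeneracy and connection maps. -/
theorem exists_unique_maximal_nondegenerate_nonconnection_face
    (P : PrecubicalConn) (hP : CubicalConnAxioms P) (n : ℕ) (τ : P.K n) :
    ∃ (k : ℕ) (ρ : P.K k),
      FaceOf P ρ τ ∧ ¬ P.Degenerate ρ ∧ ¬ P.IsConn ρ ∧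
      (∀ (k' : ℕ) (ρ' : P.K k'), FaceOf P ρ' τ → ¬ P.Degenerate ρ' → ¬ P.IsConn ρ' →
        FaceOf P ρ' ρ) ∧
      (∀ (k' : ℕ) (ρ' : P.K k'), FaceOf P ρ' τ → ¬ P.Degenerate ρ' → ¬ P.IsConn ρ' →
        (∀ (k'' : ℕ) (ρ'' : P.K k''), FaceOf P ρ'' τ → ¬ P.Degenerate ρ'' → ¬ P.IsConn ρ'' →
          FaceOf P ρ'' ρ') →
        k' = k ∧ HEq ρ' ρ) ∧
      ((P.Degenerate τ ∨ P.IsConn τ) → k < n ∧ DCImage P τ ρ) := by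
  obtain ⟨k, ρ, ⟨hface, hnd, hnc, hmax⟩, hdc⟩ :=
    exists_isMaximalNondegNonconnFace_dcImage hP n τ
  refine ⟨k, ρ, hface, hnd, hnc, hmax, fun k' ρ' hf' hnd' hnc' hmax' =>
    (hmax k' ρ' hf' hnd' hnc').antisymm (hmax' k ρ hface hnd hnc), fun hτ => ⟨?_, hdc⟩⟩
  rcases hface.dim_le.lt_or_eq with hlt | rfl
  · exact hlt
  · rw [hface.eq] at hnd hnc
    exact absurd hτ (not_or.mpr ⟨hnd, hnc⟩)
end

section
/- In a cubical set with connections, if τ is a non-degenerate n-cube and ρ is its unique maximal face that is neither degenerate nor a connection, then τ = g_k ⋯ g_1(ρ) where all g_1,…,g_k are connection maps (no degeneracy maps needed). -/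
/-!
Peeling off degeneracies and connections writes `τ = g_k ⋯ g_1(ρ₀)` with `ρ₀` a face of `τ`
that is neither degenerate nor a connection. Such faces descend along each `g_i`: the face
identities rewrite a face of `ε_j σ` or `Γ_j^β σ` as `σ` itself or as a degeneracy or connection
of a face of `σ`. Hence `ρ` and `ρ₀` are faces of each other, so they coincide; and since a
connection of a degenerate cube is degenerate, the non-degeneracy of `τ` forces every `g_i` to be
a connection.
-/

namespace FaceOf

variable {P : PrecubicalConn}

theorem trans {a b c : ℕ} {x : P.K a} {y : P.K b} {z : P.K c}
    (hxy : FaceOf P x y) (hyz : FaceOf P y z) : FaceOf P x z := by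
  induction hyz with
  | refl => exact hxy
  | step α i hi1 hi2 _ ih => exact .step α i hi1 hi2 (ih hxy)

theorem dim_le_s18 {a b : ℕ} {x : P.K a} {y : P.K b} (h : FaceOf P x y) : a ≤ b := by
  induction h with
  | refl => exact le_rfl
  | step _ _ _ _ _ ih => omega

theorem antisymm_s18 {k : ℕ} {x y : P.K k} (hxy : FaceOf P x y) (hyx : FaceOf P y x) : x = y := by
  cases hxy with
  | refl => rfl
  | step _ _ _ _ h => exact absurd (hyx.trans h).dim_le_s18 (by omega)

end FaceOf

section

variable {P : PrecubicalConn}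

theorem degenerate_degen (hP : CubicalConnAxioms P) {m : ℕ} {i : ℕ} (σ : P.K m)
    (h1 : 1 ≤ i) (h2 : i ≤ m + 1) : P.Degenerate (P.degen m i σ) :=
  ⟨i, h1, h2, by rw [hP.face_degen_eq true m i σ h1 h2]⟩

theorem isConn_conn {m : ℕ} (β : Bool) {i : ℕ} (σ : P.K m) (h1 : 1 ≤ i) (h2 : i ≤ m) :
    P.IsConn (P.conn β m i σ) :=
  ⟨β, i, σ, h1, h2, rfl⟩

theorem degenerate_conn (hP : CubicalConnAxioms P) {m : ℕ} (β : Bool) {i : ℕ} {σ : P.K m}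
    (h1 : 1 ≤ i) (h2 : i ≤ m) (hσ : P.Degenerate σ) : P.Degenerate (P.conn β m i σ) := by
  cases m with
  | zero => exact hσ.elim
  | succ m => ?_
  obtain ⟨j, hj1, hj2, hσ⟩ := hσ
  rw [hσ]
  rcases lt_trichotomy i j with hlt | rfl | hgt
  · rw [hP.conn_degen_lt β m i j _ h1 hlt hj2]
    exact degenerate_degen hP _ (by omega) (by omega)
  · rw [hP.conn_degen_eq β m i _ h1 hj2]
    exact degenerate_degen hP _ (by omega) (by omega)
  · rw [hP.conn_degen_gt β m i j _ hj1 hgt h2]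
    exact degenerate_degen hP _ hj1 (by omega)

theorem FaceOf.of_faceOf_degen (hP : CubicalConnAxioms P) {m k : ℕ} {x : P.K k} {σ : P.K m}
    {j : ℕ} (hj1 : 1 ≤ j) (hj2 : j ≤ m + 1) (h : FaceOf P x (P.degen m j σ))
    (hxd : ¬ P.Degenerate x) (hxc : ¬ P.IsConn x) : FaceOf P x σ := by
  induction m generalizing j with
  | zero =>
    cases h with
    | refl => exact absurd (degenerate_degen hP σ hj1 hj2) hxd
    | step α i hi1 hi2 h =>
      obtain rfl : i = j := by omega
      rwa [hP.face_degen_eq α 0 i σ hi1 hj2] at h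
  | succ m ih =>
    cases h with
    | refl => exact absurd (degenerate_degen hP σ hj1 hj2) hxd
    | step α i hi1 hi2 h =>
      rcases lt_trichotomy i j with hlt | rfl | hgt
      · rw [hP.face_degen_lt α m i j σ hi1 hlt hj2] at h
        exact .step α i hi1 (by omega) (ih (by omega) (by omega) h)
      · rwa [hP.face_degen_eq α (m + 1) i σ hi1 hj2] at h
      · rw [hP.face_degen_gt α m i j σ hj1 hgt hi2] at h
        exact .step α (i - 1) (by omega) (by omega) (ih hj1 (by omega) h)

theorem FaceOf.of_faceOf_conn (hP : CubicalConnAxioms P) {m k : ℕ} {x : P.K k} {σ : P.K m}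
    {β : Bool} {j : ℕ} (hj1 : 1 ≤ j) (hj2 : j ≤ m) (h : FaceOf P x (P.conn β m j σ))
    (hxd : ¬ P.Degenerate x) (hxc : ¬ P.IsConn x) : FaceOf P x σ := by
  induction m generalizing j with
  | zero => omega
  | succ m ih =>
    cases h with
    | refl => exact absurd (isConn_conn β σ hj1 hj2) hxc
    | step α i hi1 hi2 h =>
      by_cases hij : i = j ∨ i = j + 1
      · by_cases hαβ : α = β
        · subst hαβ
          rwa [hP.face_conn_self α (m + 1) i j σ hj1 hj2 hij] at h
        · rw [hP.face_conn_opp α β m i j σ hj1 hj2 hij hαβ] at h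
          exact .step α j hj1 hj2 (h.of_faceOf_degen hP hj1 hj2 hxd hxc)
      · rcases Nat.lt_or_gt_of_ne (show i ≠ j by omega) with hlt | hgt
        · rw [hP.face_conn_lt α β m i j σ hi1 hlt hj2] at h
          exact .step α i hi1 (by omega) (ih (by omega) (by omega) h)
        · rw [hP.face_conn_gt α β m i j σ hj1 (by omega) hi2] at h
          exact .step α (i - 1) (by omega) (by omega) (ih hj1 (by omega) h)

theorem DCImage.faceOf_of_faceOf (hP : CubicalConnAxioms P) {m k₀ : ℕ} {τ : P.K m}
    {ρ₀ : P.K k₀} (hτ : DCImage P τ ρ₀) {k : ℕ} {x : P.K k} (hx : FaceOf P x τ)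
    (hxd : ¬ P.Degenerate x) (hxc : ¬ P.IsConn x) : FaceOf P x ρ₀ := by
  induction hτ with
  | refl => exact hx
  | degen i h1 h2 _ ih => exact ih (hx.of_faceOf_degen hP h1 h2 hxd hxc)
  | conn β i h1 h2 _ ih => exact ih (hx.of_faceOf_conn hP h1 h2 hxd hxc)

theorem DCImage.connImage_or_degenerate (hP : CubicalConnAxioms P) {m k : ℕ} {τ : P.K m}
    {ρ : P.K k} (h : DCImage P τ ρ) : ConnImage P τ ρ ∨ P.Degenerate τ := by
  induction h with
  | refl σ => exact .inl (.refl σ)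
  | degen i h1 h2 _ _ => exact .inr (degenerate_degen hP _ h1 h2)
  | conn β i h1 h2 _ ih => exact ih.imp (.conn β i h1 h2) (degenerate_conn hP β h1 h2)

theorem exists_dcImage_of_nondegenerate_nonconn_face (hP : CubicalConnAxioms P) :
    ∀ {n : ℕ} (σ : P.K n), ∃ (k : ℕ) (ρ : P.K k),
      DCImage P σ ρ ∧ FaceOf P ρ σ ∧ ¬ P.Degenerate ρ ∧ ¬ P.IsConn ρ
  | 0, σ => ⟨0, σ, .refl σ, .refl σ, id, id⟩
  | m + 1, σ => by
    by_cases hd : P.Degenerate σ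
    · obtain ⟨i, hi1, hi2, hσ⟩ := hd
      obtain ⟨k, ρ, hdc, hf, hρ⟩ := exists_dcImage_of_nondegenerate_nonconn_face hP
        (P.face true m i σ)
      refine ⟨k, ρ, hσ ▸ .degen i hi1 hi2 hdc, hf.trans (.step true i hi1 hi2 (.refl _)), hρ⟩
    by_cases hc : P.IsConn σ
    · obtain ⟨β, i, σ', hi1, hi2, rfl⟩ := hc
      obtain ⟨k, ρ, hdc, hf, hρ⟩ := exists_dcImage_of_nondegenerate_nonconn_face hP σ'
      have hσ' : FaceOf P σ' (P.conn β m i σ') := .step β i hi1 (by omega) <| by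
        rw [hP.face_conn_self β m i i σ' hi1 hi2 (.inl rfl)]
        exact .refl σ'
      exact ⟨k, ρ, .conn β i hi1 hi2 hdc, hf.trans hσ', hρ⟩
    exact ⟨m + 1, σ, .refl σ, .refl σ, hd, hc⟩

end

/-- Lemma A.3: if `τ` is non-degenerate and `ρ` is its unique maximal face that is
neither degenerate nor a connection, then `τ` is obtained from `ρ` by applying
connection maps only. -/
theorem nondegenerate_is_connImage_of_maximal_face
    (P : PrecubicalConn) (hP : CubicalConnAxioms P) (n k : ℕ) (τ : P.K n) (ρ : P.K k)
    (hτ : ¬ P.Degenerate τ)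
    (hface : FaceOf P ρ τ) (hρd : ¬ P.Degenerate ρ) (hρc : ¬ P.IsConn ρ)
    (hmax : ∀ (k' : ℕ) (ρ' : P.K k'), FaceOf P ρ' τ → ¬ P.Degenerate ρ' → ¬ P.IsConn ρ' →
      FaceOf P ρ' ρ) :
    ConnImage P τ ρ := by
  obtain ⟨k₀, ρ₀, hdc, hρ₀τ, hρ₀d, hρ₀c⟩ := exists_dcImage_of_nondegenerate_nonconn_face hP τ
  have hρ₀ρ : FaceOf P ρ₀ ρ := hmax k₀ ρ₀ hρ₀τ hρ₀d hρ₀c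
  have hρρ₀ : FaceOf P ρ ρ₀ := hdc.faceOf_of_faceOf hP hface hρd hρc
  obtain rfl : k₀ = k := le_antisymm hρ₀ρ.dim_le_s18 hρρ₀.dim_le_s18
  obtain rfl : ρ₀ = ρ := hρ₀ρ.antisymm_s18 hρρ₀
  exact (hdc.connImage_or_degenerate hP).resolve_right hτ
end
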